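/- arXiv:2105.05001 — 2 statements merged into one kernel-verified Lean document; each statement's English description precedes it below -/
import Mathlib

section
/- Suppose ‖Δu_r(t)‖₂ ≤ (2η_local·K·(1 + 2η_local·n·K)·√n)/(N·√m)·‖y − y(t)‖₂ for all r ∈ [m], where Δu_r(t) = (1/N)·Σ_{c=1}^N (w_{K,c,r}(t) − u_r(t)). Then C₄ := ‖y(t+1) − y(t)‖₂² ≤ (4·η_local²·η_global²·n²·K²·(1 + 2η_local·n·K)²/N²)·‖y − y(t)‖₂². -/
open MeasureTheory ProbabilityTheory Real
open scoped BigOperators ENNReal NNReal ProbabilityTheory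

noncomputable section

/-- real indicator of `0 ≤ z` -/
def posInd (z : ℝ) : ℝ := if 0 ≤ z then 1 else 0

/-- real indicator of `z ≤ c` -/
def leInd (z c : ℝ) : ℝ := if z ≤ c then 1 else 0

/-- euclidean inner product -/
def dot {α : Type*} [Fintype α] (u v : α → ℝ) : ℝ := ∑ i, u i * v i

/-- euclidean norm -/
def norm2 {α : Type*} [Fintype α] (v : α → ℝ) : ℝ := Real.sqrt (∑ i, v i ^ 2)

/-- ReLU -/
def relu (z : ℝ) : ℝ := max z 0

/-- one-hidden-layer ReLU network -/
def fnet {d : ℕ} (m : ℕ) (a : Fin m → ℝ) (u : Fin m → Fin d → ℝ) (x : Fin d → ℝ) : ℝ :=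
  (Real.sqrt m)⁻¹ * ∑ r, a r * relu (dot (u r) x)

/-- Frobenius norm -/
def frobG {α β : Type*} [Fintype α] [Fintype β] (M : Matrix α β ℝ) : ℝ :=
  Real.sqrt (∑ p, ∑ q, M p q ^ 2)

/-- minimal Rayleigh quotient (for symmetric `H` this is the least eigenvalue) -/
def eigMin {n : ℕ} (H : Matrix (Fin n) (Fin n) ℝ) : ℝ :=
  sInf {r : ℝ | ∃ v : Fin n → ℝ, ∑ i, v i ^ 2 = 1 ∧ r = ∑ i, ∑ j, v i * H i j * v j}

/-- maximal Rayleigh quotient (for symmetric `H` this is the largest eigenvalue) -/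
def eigMax {n : ℕ} (H : Matrix (Fin n) (Fin n) ℝ) : ℝ :=
  sSup {r : ℝ | ∃ v : Fin n → ℝ, ∑ i, v i ^ 2 = 1 ∧ r = ∑ i, ∑ j, v i * H i j * v j}

/-- condition number -/
def condNum {n : ℕ} (H : Matrix (Fin n) (Fin n) ℝ) : ℝ := eigMax H / eigMin H

/-- asymmetric Gram matrix built from two weight families -/
def gram2 {d : ℕ} (m n : ℕ) (x : Fin n → Fin d → ℝ)
    (wt wh : Fin m → Fin d → ℝ) : Matrix (Fin n) (Fin n) ℝ :=
  fun i j => (m : ℝ)⁻¹ * dot (x i) (x j) *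
    ∑ r, posInd (dot (wt r) (x i)) * posInd (dot (wh r) (x j))

/-- Gram matrix at a single weight family -/
def gram0 {d : ℕ} (m n : ℕ) (x : Fin n → Fin d → ℝ) (u : Fin m → Fin d → ℝ) :
    Matrix (Fin n) (Fin n) ℝ := gram2 m n x u u

/-- standard gaussian `N(0, I_d)` on `ℝ^d` -/
def stdGaussianPi (d : ℕ) : Measure (Fin d → ℝ) := Measure.pi fun _ => gaussianReal 0 1

/-- i.i.d. family of `m` standard gaussians on `ℝ^d` -/
def iidGaussian (m d : ℕ) : Measure (Fin m → Fin d → ℝ) := Measure.pi fun _ => stdGaussianPi d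

/-- gaussian `N(0, σ² I_d)` on `ℝ^d` -/
def scaledGaussianPi (d : ℕ) (σ : ℝ) : Measure (Fin d → ℝ) :=
  Measure.pi fun _ => gaussianReal 0 (Real.toNNReal (σ ^ 2))

/-- i.i.d. family of `m` scaled gaussians on `ℝ^d` -/
def iidScaledGaussian (m d : ℕ) (σ : ℝ) : Measure (Fin m → Fin d → ℝ) :=
  Measure.pi fun _ => scaledGaussianPi d σ

/-- uniform measure on `{−1, +1}` -/
def pmUniform : Measure ℝ :=
  ((1 : ℝ≥0) / 2) • Measure.dirac (1 : ℝ) + ((1 : ℝ≥0) / 2) • Measure.dirac (-1 : ℝ)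

/-- i.i.d. family of `m` uniform signs -/
def iidSign (m : ℕ) : Measure (Fin m → ℝ) := Measure.pi fun _ => pmUniform

/-- NTK matrix `H^∞` -/
def Hinf (d n : ℕ) (x : Fin n → Fin d → ℝ) : Matrix (Fin n) (Fin n) ℝ :=
  fun i j => ∫ w, dot (x i) (x j) * posInd (dot w (x i)) * posInd (dot w (x j)) ∂(stdGaussianPi d)

open Classical in
/-- the set `Q_i` of neurons whose activation pattern at `xi` is stable under
`R`-perturbations of the initialization -/
def Qset {d : ℕ} (m : ℕ) (R : ℝ) (u0 : Fin m → Fin d → ℝ) (xi : Fin d → ℝ) : Finset (Fin m) :=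
  Finset.univ.filter fun r =>
    ∀ w : Fin d → ℝ, norm2 (fun i => w i - u0 r i) ≤ R →
      ((0 ≤ dot w xi) ↔ (0 ≤ dot (u0 r) xi))

/-- the matrix `J` of per-example gradients, one weight family per column -/
def Jmat {d : ℕ} (m n : ℕ) (a : Fin m → ℝ) (x : Fin n → Fin d → ℝ)
    (W : Fin n → Fin m → Fin d → ℝ) : Matrix (Fin m × Fin d) (Fin n) ℝ :=
  fun p i => (Real.sqrt m)⁻¹ * a p.1 * x i p.2 * posInd (dot (W i p.1) (x i))

lemma norm2_sq_eq {α : Type*} [Fintype α] (v : α → ℝ) : norm2 v ^ 2 = ∑ i, v i ^ 2 :=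
  Real.sq_sqrt (Finset.sum_nonneg fun i _ => sq_nonneg _)

lemma abs_dot_le {α : Type*} [Fintype α] (u v : α → ℝ) : |dot u v| ≤ norm2 u * norm2 v := by
  have h := Finset.sum_mul_sq_le_sq_mul_sq Finset.univ u v
  have h2 : |dot u v| = Real.sqrt ((∑ i, u i * v i) ^ 2) := by
    rw [Real.sqrt_sq_eq_abs]; rfl
  rw [h2, norm2, norm2, ← Real.sqrt_mul (Finset.sum_nonneg fun i _ => sq_nonneg _)]
  exact Real.sqrt_le_sqrt h

/-- **Bounding `C₄`** (Claim C.6).  If every aggregated update satisfies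
`‖Δu_r(t)‖₂ ≤ 2η_l K(1+2η_l nK)√n/(N√m)·‖y − y(t)‖₂`, then
`C₄ = ‖y(t+1) − y(t)‖₂² ≤ 4η_l²η_g²n²K²(1+2η_l nK)²/N² · ‖y − y(t)‖₂²`. -/
theorem bound_C4
    (d m n N K : ℕ) (ηl ηg : ℝ)
    (hm : 0 < m) (hN : 0 < N) (hηl : 0 ≤ ηl) (hηg : 0 ≤ ηg)
    (x : Fin n → Fin d → ℝ) (hx : ∀ i, norm2 (x i) = 1) (y : Fin n → ℝ)
    (a : Fin m → ℝ) (ha : ∀ r, a r = 1 ∨ a r = -1)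
    -- server weights at round `t` and local weights `w_{K,c,r}(t)` after `K` local steps
    (ut : Fin m → Fin d → ℝ) (w : Fin N → Fin m → Fin d → ℝ)
    -- the aggregated update and the next server weights
    (Δu : Fin m → Fin d → ℝ)
    (hΔ : ∀ r, Δu r = fun i => (N : ℝ)⁻¹ * ∑ c, (w c r i - ut r i))
    (ut' : Fin m → Fin d → ℝ)
    (hstep : ∀ r, ut' r = fun i => ut r i + ηg * Δu r i)
    -- assumed bound on the aggregated updates
    (hbound : ∀ r, norm2 (Δu r) ≤
      2 * ηl * K * (1 + 2 * ηl * n * K) * Real.sqrt n / (N * Real.sqrt m) *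
        norm2 (fun i => y i - fnet m a ut (x i))) :
    norm2 (fun i => fnet m a ut' (x i) - fnet m a ut (x i)) ^ 2 ≤
      4 * ηl ^ 2 * ηg ^ 2 * n ^ 2 * K ^ 2 * (1 + 2 * ηl * n * K) ^ 2 / N ^ 2 *
        norm2 (fun i => y i - fnet m a ut (x i)) ^ 2 := by
  set E := norm2 (fun i => y i - fnet m a ut (x i)) with hEdef
  have hE : 0 ≤ E := Real.sqrt_nonneg _
  have hm' : (0:ℝ) < m := by exact_mod_cast hm
  have hN' : (0:ℝ) < N := by exact_mod_cast hN
  have hsm : (0:ℝ) < Real.sqrt m := Real.sqrt_pos.mpr hm'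
  set B : ℝ := 2 * ηl * K * (1 + 2 * ηl * n * K) * Real.sqrt n / (N * Real.sqrt m) * E with hB
  have hBnn : 0 ≤ B := by positivity
  clear_value B
  have key : ∀ i, |fnet m a ut' (x i) - fnet m a ut (x i)| ≤ Real.sqrt m * (ηg * B) := by
    intro i
    have hterm : ∀ r : Fin m,
        |a r * (relu (dot (ut' r) (x i)) - relu (dot (ut r) (x i)))| ≤ ηg * B := by
      intro r
      have ha1 : |a r| = 1 := by rcases ha r with h | h <;> simp [h]
      have hdot : dot (ut' r) (x i) - dot (ut r) (x i) = ηg * dot (Δu r) (x i) := by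
        simp only [dot, hstep r, Finset.mul_sum, ← Finset.sum_sub_distrib]
        exact Finset.sum_congr rfl fun j _ => by ring
      calc |a r * (relu (dot (ut' r) (x i)) - relu (dot (ut r) (x i)))|
          = |relu (dot (ut' r) (x i)) - relu (dot (ut r) (x i))| := by
            rw [abs_mul, ha1, one_mul]
        _ ≤ |dot (ut' r) (x i) - dot (ut r) (x i)| := abs_max_sub_max_le_abs _ _ _
        _ = ηg * |dot (Δu r) (x i)| := by rw [hdot, abs_mul, abs_of_nonneg hηg]
        _ ≤ ηg * (norm2 (Δu r) * norm2 (x i)) :=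
            mul_le_mul_of_nonneg_left (abs_dot_le _ _) hηg
        _ = ηg * norm2 (Δu r) := by rw [hx i, mul_one]
        _ ≤ ηg * B := mul_le_mul_of_nonneg_left (hbound r) hηg
    have hfd : fnet m a ut' (x i) - fnet m a ut (x i)
        = (Real.sqrt m)⁻¹ *
          ∑ r, a r * (relu (dot (ut' r) (x i)) - relu (dot (ut r) (x i))) := by
      simp only [fnet, ← mul_sub, ← Finset.sum_sub_distrib]
    rw [hfd, abs_mul, abs_of_nonneg (inv_nonneg.mpr hsm.le)]
    have hsum : |∑ r, a r * (relu (dot (ut' r) (x i)) - relu (dot (ut r) (x i)))|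
        ≤ (m : ℝ) * (ηg * B) := by
      calc |∑ r, a r * (relu (dot (ut' r) (x i)) - relu (dot (ut r) (x i)))|
          ≤ ∑ r, |a r * (relu (dot (ut' r) (x i)) - relu (dot (ut r) (x i)))| :=
            Finset.abs_sum_le_sum_abs _ _
        _ ≤ ∑ _r : Fin m, ηg * B := Finset.sum_le_sum fun r _ => hterm r
        _ = (m : ℝ) * (ηg * B) := by simp [mul_comm]
    calc (Real.sqrt m)⁻¹ *
          |∑ r, a r * (relu (dot (ut' r) (x i)) - relu (dot (ut r) (x i)))|
        ≤ (Real.sqrt m)⁻¹ * ((m : ℝ) * (ηg * B)) :=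
          mul_le_mul_of_nonneg_left hsum (inv_nonneg.mpr hsm.le)
      _ = Real.sqrt m * (ηg * B) := by
          have hmm : (m : ℝ) * (ηg * B) = Real.sqrt m * (Real.sqrt m * (ηg * B)) := by
            conv_lhs => rw [← Real.mul_self_sqrt hm'.le]
            rw [mul_assoc]
          rw [hmm, inv_mul_cancel_left₀ hsm.ne']
  have hL : norm2 (fun i => fnet m a ut' (x i) - fnet m a ut (x i)) ^ 2
      = ∑ i, (fnet m a ut' (x i) - fnet m a ut (x i)) ^ 2 := norm2_sq_eq _
  rw [hL]
  have hstep2 : ∑ i, (fnet m a ut' (x i) - fnet m a ut (x i)) ^ 2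
      ≤ (n : ℝ) * (Real.sqrt m * (ηg * B)) ^ 2 := by
    calc ∑ i, (fnet m a ut' (x i) - fnet m a ut (x i)) ^ 2
        ≤ ∑ _i : Fin n, (Real.sqrt m * (ηg * B)) ^ 2 := by
          refine Finset.sum_le_sum fun i _ => ?_
          have h := key i
          nlinarith [abs_nonneg (fnet m a ut' (x i) - fnet m a ut (x i)),
            sq_abs (fnet m a ut' (x i) - fnet m a ut (x i))]
      _ = (n : ℝ) * (Real.sqrt m * (ηg * B)) ^ 2 := by simp [mul_comm]
  refine hstep2.trans_eq ?_
  have h1 : Real.sqrt m ^ 2 = (m : ℝ) := Real.sq_sqrt hm'.le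
  have h2 : Real.sqrt n ^ 2 = (n : ℝ) := Real.sq_sqrt (Nat.cast_nonneg n)
  rw [hB]
  field_simp
  ring_nf
  rw [h2]
  ring

end
end

section
/- Suppose that at round t, ‖y_c^{(k+1)}(t) − y_c^{(k)}(t)‖₂² ≤ η_local²·n²·‖y_c^{(k)}(t) − y_c‖₂² holds for all k ∈ [K] and c ∈ [N], and η_local ≤ λ/(1000·κ·n²·K). Then for all k ∈ [K] and c ∈ [N]: (i) ‖y_c(t) − y_c^{(k)}(t)‖₂ ≤ 2·η_local·n·K·‖y_c(t) − y_c‖₂; and (ii) for every r ∈ [m], ‖Δu_r(t)‖₂ ≤ (2·η_local·K·(1 + 2η_local·n·K)·√n)/(N·√m)·‖y − y(t)‖₂, where Δu_r(t) = (a_r/N)·Σ_{c∈[N]} Σ_{k∈[K]} (η_local/√m)·Σ_{j∈S_c} (y_j − y_c^{(k)}(t)_j)·x_j·1[w_{k,c,r}(t)^⊤ x_j ≥ 0]. -/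
open MeasureTheory ProbabilityTheory Real
open scoped BigOperators ENNReal NNReal ProbabilityTheory

noncomputable section

section AuxLemmas

variable {ι : Type*}

lemma sqrt_sum_sq_add_le (s : Finset ι) (f g : ι → ℝ) :
    Real.sqrt (∑ i ∈ s, (f i + g i) ^ 2) ≤
      Real.sqrt (∑ i ∈ s, f i ^ 2) + Real.sqrt (∑ i ∈ s, g i ^ 2) := by
  have hcs := Real.sum_mul_le_sqrt_mul_sqrt s f g
  have hf : (0:ℝ) ≤ ∑ i ∈ s, f i ^ 2 := Finset.sum_nonneg fun i _ => sq_nonneg _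
  have hg : (0:ℝ) ≤ ∑ i ∈ s, g i ^ 2 := Finset.sum_nonneg fun i _ => sq_nonneg _
  have h1 := Real.sq_sqrt hf
  have h2 := Real.sq_sqrt hg
  have e1 : ∀ i ∈ s, (f i + g i) ^ 2 = f i ^ 2 + (2 * (f i * g i) + g i ^ 2) :=
    fun i _ => by ring
  have e2 : ∑ i ∈ s, 2 * (f i * g i) = 2 * ∑ i ∈ s, f i * g i := by rw [Finset.mul_sum]
  have hexp : ∑ i ∈ s, (f i + g i) ^ 2 =
      (∑ i ∈ s, f i ^ 2) + 2 * (∑ i ∈ s, f i * g i) + ∑ i ∈ s, g i ^ 2 := by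
    rw [Finset.sum_congr rfl e1, Finset.sum_add_distrib, Finset.sum_add_distrib, e2]; ring
  have hB : (0:ℝ) ≤ Real.sqrt (∑ i ∈ s, f i ^ 2) + Real.sqrt (∑ i ∈ s, g i ^ 2) := by positivity
  rw [← Real.sqrt_sq hB]
  apply Real.sqrt_le_sqrt
  nlinarith [Real.sqrt_nonneg (∑ i ∈ s, f i ^ 2), Real.sqrt_nonneg (∑ i ∈ s, g i ^ 2)]

lemma norm2_nonneg' {α : Type*} [Fintype α] (v : α → ℝ) : 0 ≤ norm2 v := Real.sqrt_nonneg _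

lemma norm2_add_le {α : Type*} [Fintype α] (v w : α → ℝ) :
    norm2 (fun i => v i + w i) ≤ norm2 v + norm2 w := by
  simpa [norm2] using sqrt_sum_sq_add_le Finset.univ v w

lemma norm2_smul {α : Type*} [Fintype α] (c : ℝ) (v : α → ℝ) :
    norm2 (fun i => c * v i) = |c| * norm2 v := by
  simp only [norm2, mul_pow]
  rw [← Finset.mul_sum, Real.sqrt_mul (sq_nonneg c), Real.sqrt_sq_eq_abs]

lemma norm2_sum_le {α ι : Type*} [Fintype α] (s : Finset ι) (v : ι → α → ℝ) :
    norm2 (fun i => ∑ j ∈ s, v j i) ≤ ∑ j ∈ s, norm2 (v j) := by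
  induction s using Finset.cons_induction with
  | empty => simp [norm2]
  | cons a s ha ih =>
    simp only [Finset.sum_cons]
    exact le_trans (norm2_add_le (v a) (fun i => ∑ j ∈ s, v j i)) (by linarith)

lemma sum_abs_le_sqrt (s : Finset ι) (f : ι → ℝ) :
    ∑ i ∈ s, |f i| ≤ Real.sqrt s.card * Real.sqrt (∑ i ∈ s, f i ^ 2) := by
  have h := Real.sum_mul_le_sqrt_mul_sqrt s (fun _ => (1:ℝ)) (fun i => |f i|)
  simpa [sq_abs] using h

lemma drift_aux (K : ℕ) (α e0 : ℝ) (hα0 : 0 ≤ α) (he0 : 0 ≤ e0) (hαK : 2 * α * K ≤ 1)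
    (dd : ℕ → ℝ) (hd0 : dd 0 = 0)
    (hstep : ∀ k < K, dd (k + 1) ≤ dd k + α * (e0 + dd k)) :
    ∀ k ≤ K, dd k ≤ 2 * α * k * e0 := by
  intro k hk
  induction k with
  | zero => simp [hd0]
  | succ k ih =>
    have hkK : k < K := Nat.lt_of_succ_le hk
    have ih' := ih (le_of_lt hkK)
    have hs := hstep k hkK
    have hkR : (k:ℝ) + 1 ≤ K := by exact_mod_cast hk
    have h2 : 2 * α * k ≤ 1 := by
      nlinarith [mul_nonneg hα0 (sub_nonneg.2 (le_trans (by linarith) hkR : (k:ℝ) ≤ K))]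
    push_cast
    nlinarith [mul_nonneg (mul_nonneg hα0 he0) (sub_nonneg.2 h2),
      mul_le_mul_of_nonneg_left ih' hα0]

end AuxLemmas

/-- **Control of the local updates** (Lemma C.7).  If at round `t` every local step
satisfies `‖y_c^{(k+1)}(t) − y_c^{(k)}(t)‖₂² ≤ η_l²n²‖y_c^{(k)}(t) − y_c‖₂²` and
`η_l ≤ λ/(1000κn²K)`, then (i) `‖y_c(t) − y_c^{(k)}(t)‖₂ ≤ 2η_l nK‖y_c(t) − y_c‖₂`
for all `k, c`, and (ii) `‖Δu_r(t)‖₂ ≤ 2η_l K(1+2η_l nK)√n/(N√m)·‖y − y(t)‖₂`. -/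
theorem bound_local_update
    (d m n N K : ℕ) (hm : 0 < m) (hn : 0 < n) (hN : 0 < N) (hK : 0 < K)
    (ηl lam kap : ℝ) (hηl0 : 0 ≤ ηl)
    (hlam : 0 < lam) (hlam1 : lam ≤ 1) (hkap : 1 ≤ kap)
    (hηl : ηl ≤ lam / (1000 * kap * n ^ 2 * K))
    (x : Fin n → Fin d → ℝ) (hx : ∀ i, norm2 (x i) = 1) (y : Fin n → ℝ)
    (S : Fin n → Fin N) (a : Fin m → ℝ) (ha : ∀ r, a r = 1 ∨ a r = -1)
    -- server weights at round `t` and local weights `w_{k,c}(t)`, starting at `u(t)`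
    (ut : Fin m → Fin d → ℝ) (w : ℕ → Fin N → Fin m → Fin d → ℝ)
    (hw0 : ∀ c, w 0 c = ut)
    -- per-step local movement bound (Eq. (C.4)) for each local step
    (hstep : ∀ k < K, ∀ c : Fin N,
      (∑ i ∈ Finset.univ.filter (fun i => S i = c),
          (fnet m a (w (k + 1) c) (x i) - fnet m a (w k c) (x i)) ^ 2) ≤
        ηl ^ 2 * n ^ 2 *
          (∑ i ∈ Finset.univ.filter (fun i => S i = c),
            (fnet m a (w k c) (x i) - y i) ^ 2)) :
    -- (i) drift of local predictions
    (∀ k ≤ K, ∀ c : Fin N,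
      Real.sqrt (∑ i ∈ Finset.univ.filter (fun i => S i = c),
          (fnet m a ut (x i) - fnet m a (w k c) (x i)) ^ 2) ≤
        2 * ηl * n * K *
          Real.sqrt (∑ i ∈ Finset.univ.filter (fun i => S i = c),
            (fnet m a ut (x i) - y i) ^ 2)) ∧
    -- (ii) bound on the aggregated update
    (∀ r : Fin m,
      norm2 (fun i : Fin d =>
          a r / N * ∑ c : Fin N, ∑ k ∈ Finset.range K,
            ηl * (Real.sqrt m)⁻¹ *
              ∑ j ∈ Finset.univ.filter (fun j => S j = c),
                (y j - fnet m a (w k c) (x j)) * x j i *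
                  posInd (dot (w k c r) (x j))) ≤
        2 * ηl * K * (1 + 2 * ηl * n * K) * Real.sqrt n / (N * Real.sqrt m) *
          norm2 (fun i => y i - fnet m a ut (x i))) := by
  classical
  have hmR : (0:ℝ) < Real.sqrt m := Real.sqrt_pos.mpr (by exact_mod_cast hm)
  have hn1 : (1:ℝ) ≤ n := by exact_mod_cast hn
  have hK1 : (1:ℝ) ≤ K := by exact_mod_cast hK
  have hN0 : (0:ℝ) < N := by exact_mod_cast hN
  have hα0 : (0:ℝ) ≤ ηl * n := mul_nonneg hηl0 (by positivity)
  have hαK : 2 * (ηl * (n:ℝ)) * (K:ℝ) ≤ 1 := by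
    have hden : (0:ℝ) < 1000 * kap * (n:ℝ) ^ 2 * K := by positivity
    have h1 : ηl * (1000 * kap * (n:ℝ) ^ 2 * K) ≤ lam := (le_div_iff₀ hden).mp hηl
    have hkn : (1:ℝ) * ((n:ℝ) * K) ≤ (kap * n) * ((n:ℝ) * K) :=
      mul_le_mul_of_nonneg_right (by nlinarith) (by positivity)
    have h2 : 2 * (n:ℝ) * K ≤ 1000 * kap * (n:ℝ) ^ 2 * K := by nlinarith [hkn, mul_pos (mul_pos (by norm_num : (0:ℝ) < 1) (by positivity : (0:ℝ) < (n:ℝ))) (by positivity : (0:ℝ) < (K:ℝ))]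
    nlinarith [mul_le_mul_of_nonneg_left h2 hηl0]
  have h1p : (0:ℝ) ≤ 1 + 2 * (ηl * (n:ℝ)) * K := by
    nlinarith [mul_nonneg hα0 (le_trans zero_le_one hK1)]
  have hek : ∀ (c : Fin N) (k : ℕ),
      Real.sqrt (∑ i ∈ Finset.univ.filter (fun i => S i = c),
          (fnet m a (w k c) (x i) - y i) ^ 2) ≤
        Real.sqrt (∑ i ∈ Finset.univ.filter (fun i => S i = c),
            (fnet m a ut (x i) - y i) ^ 2) +
        Real.sqrt (∑ i ∈ Finset.univ.filter (fun i => S i = c),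
            (fnet m a ut (x i) - fnet m a (w k c) (x i)) ^ 2) := by
    intro c k
    have h := sqrt_sum_sq_add_le (Finset.univ.filter (fun i => S i = c))
      (fun i => fnet m a ut (x i) - y i)
      (fun i => fnet m a (w k c) (x i) - fnet m a ut (x i))
    have h1 : ∑ i ∈ Finset.univ.filter (fun i => S i = c),
        ((fnet m a ut (x i) - y i) + (fnet m a (w k c) (x i) - fnet m a ut (x i))) ^ 2
        = ∑ i ∈ Finset.univ.filter (fun i => S i = c),
          (fnet m a (w k c) (x i) - y i) ^ 2 :=
      Finset.sum_congr rfl fun i _ => by ring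
    have h2 : ∑ i ∈ Finset.univ.filter (fun i => S i = c),
        (fnet m a (w k c) (x i) - fnet m a ut (x i)) ^ 2
        = ∑ i ∈ Finset.univ.filter (fun i => S i = c),
          (fnet m a ut (x i) - fnet m a (w k c) (x i)) ^ 2 :=
      Finset.sum_congr rfl fun i _ => by ring
    rw [h1, h2] at h
    exact h
  have key : ∀ c : Fin N, ∀ k ≤ K,
      Real.sqrt (∑ i ∈ Finset.univ.filter (fun i => S i = c),
          (fnet m a ut (x i) - fnet m a (w k c) (x i)) ^ 2) ≤
        2 * (ηl * (n:ℝ)) * (k:ℝ) *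
          Real.sqrt (∑ i ∈ Finset.univ.filter (fun i => S i = c),
            (fnet m a ut (x i) - y i) ^ 2) := by
    intro c
    refine drift_aux K (ηl * (n:ℝ))
      (Real.sqrt (∑ i ∈ Finset.univ.filter (fun i => S i = c),
        (fnet m a ut (x i) - y i) ^ 2)) hα0 (Real.sqrt_nonneg _) hαK
      (fun k => Real.sqrt (∑ i ∈ Finset.univ.filter (fun i => S i = c),
        (fnet m a ut (x i) - fnet m a (w k c) (x i)) ^ 2)) ?_ ?_
    · simp [hw0 c]
    · intro k hk
      have hA := sqrt_sum_sq_add_le (Finset.univ.filter (fun i => S i = c))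
        (fun i => fnet m a ut (x i) - fnet m a (w k c) (x i))
        (fun i => fnet m a (w k c) (x i) - fnet m a (w (k+1) c) (x i))
      have h1 : ∑ i ∈ Finset.univ.filter (fun i => S i = c),
          ((fnet m a ut (x i) - fnet m a (w k c) (x i)) +
            (fnet m a (w k c) (x i) - fnet m a (w (k+1) c) (x i))) ^ 2
          = ∑ i ∈ Finset.univ.filter (fun i => S i = c),
            (fnet m a ut (x i) - fnet m a (w (k+1) c) (x i)) ^ 2 :=
        Finset.sum_congr rfl fun i _ => by ring
      have h2 : ∑ i ∈ Finset.univ.filter (fun i => S i = c),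
          (fnet m a (w k c) (x i) - fnet m a (w (k+1) c) (x i)) ^ 2
          = ∑ i ∈ Finset.univ.filter (fun i => S i = c),
            (fnet m a (w (k+1) c) (x i) - fnet m a (w k c) (x i)) ^ 2 :=
        Finset.sum_congr rfl fun i _ => by ring
      rw [h1, h2] at hA
      have hs' : Real.sqrt (∑ i ∈ Finset.univ.filter (fun i => S i = c),
          (fnet m a (w (k+1) c) (x i) - fnet m a (w k c) (x i)) ^ 2) ≤
          (ηl * (n:ℝ)) * Real.sqrt (∑ i ∈ Finset.univ.filter (fun i => S i = c),
            (fnet m a (w k c) (x i) - y i) ^ 2) := by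
        have h3 := Real.sqrt_le_sqrt (hstep k hk c)
        rwa [show ηl ^ 2 * (n:ℝ) ^ 2 * (∑ i ∈ Finset.univ.filter (fun i => S i = c),
            (fnet m a (w k c) (x i) - y i) ^ 2)
            = (ηl * (n:ℝ)) ^ 2 * (∑ i ∈ Finset.univ.filter (fun i => S i = c),
            (fnet m a (w k c) (x i) - y i) ^ 2) from by ring,
          Real.sqrt_mul (sq_nonneg _), Real.sqrt_sq hα0] at h3
      have h4 := mul_le_mul_of_nonneg_left (hek c k) hα0
      linarith [hA, hs', h4]
  constructor
  · intro k hk c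
    have h := key c k hk
    have hkR : (k:ℝ) ≤ K := by exact_mod_cast hk
    have he0 := Real.sqrt_nonneg (∑ i ∈ Finset.univ.filter (fun i => S i = c),
      (fnet m a ut (x i) - y i) ^ 2)
    nlinarith [mul_nonneg (mul_nonneg (by linarith : (0:ℝ) ≤ 2 * (ηl * (n:ℝ))) he0)
      (sub_nonneg.2 hkR)]
  · intro r
    have hnormy : (0:ℝ) ≤ norm2 (fun i => y i - fnet m a ut (x i)) := Real.sqrt_nonneg _
    have hsn : (0:ℝ) ≤ ηl * (Real.sqrt m)⁻¹ := mul_nonneg hηl0 (inv_nonneg.2 hmR.le)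
    have habs : |a r / (N:ℝ)| = 1 / N := by
      rcases ha r with h | h <;> rw [h] <;> rw [abs_div] <;>
        rw [abs_of_pos hN0] <;> norm_num
    -- squared per-client error bound
    have hEk2 : ∀ k ≤ K, ∀ c : Fin N,
        (∑ i ∈ Finset.univ.filter (fun i => S i = c),
          (fnet m a (w k c) (x i) - y i) ^ 2) ≤
        (1 + 2 * (ηl * (n:ℝ)) * K) ^ 2 *
          ∑ i ∈ Finset.univ.filter (fun i => S i = c),
            (fnet m a ut (x i) - y i) ^ 2 := by
      intro k hk c
      have h1 := hek c k
      have h2 := key c k hk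
      have hkR : (k:ℝ) ≤ K := by exact_mod_cast hk
      have hE0n : (0:ℝ) ≤ ∑ i ∈ Finset.univ.filter (fun i => S i = c),
          (fnet m a ut (x i) - y i) ^ 2 := Finset.sum_nonneg fun i _ => sq_nonneg _
      have hEkn : (0:ℝ) ≤ ∑ i ∈ Finset.univ.filter (fun i => S i = c),
          (fnet m a (w k c) (x i) - y i) ^ 2 := Finset.sum_nonneg fun i _ => sq_nonneg _
      have s1 := Real.sq_sqrt hE0n
      have s2 := Real.sq_sqrt hEkn
      have h4 : 2 * (ηl * (n:ℝ)) * (k:ℝ) ≤ 2 * (ηl * (n:ℝ)) * (K:ℝ) :=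
        mul_le_mul_of_nonneg_left hkR (by linarith : (0:ℝ) ≤ 2 * (ηl * (n:ℝ)))
      have h5 := mul_le_mul_of_nonneg_right h4
        (Real.sqrt_nonneg (∑ i ∈ Finset.univ.filter (fun i => S i = c),
          (fnet m a ut (x i) - y i) ^ 2))
      have h3 : Real.sqrt (∑ i ∈ Finset.univ.filter (fun i => S i = c),
          (fnet m a (w k c) (x i) - y i) ^ 2) ≤
          (1 + 2 * (ηl * (n:ℝ)) * K) *
          Real.sqrt (∑ i ∈ Finset.univ.filter (fun i => S i = c),
            (fnet m a ut (x i) - y i) ^ 2) := by linarith [h1, h2, h5]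
      have h8 := Real.mul_self_sqrt hEkn
      have h9 := Real.mul_self_sqrt hE0n
      calc (∑ i ∈ Finset.univ.filter (fun i => S i = c),
            (fnet m a (w k c) (x i) - y i) ^ 2)
          = Real.sqrt (∑ i ∈ Finset.univ.filter (fun i => S i = c),
              (fnet m a (w k c) (x i) - y i) ^ 2) *
            Real.sqrt (∑ i ∈ Finset.univ.filter (fun i => S i = c),
              (fnet m a (w k c) (x i) - y i) ^ 2) := h8.symm
        _ ≤ ((1 + 2 * (ηl * (n:ℝ)) * K) *
              Real.sqrt (∑ i ∈ Finset.univ.filter (fun i => S i = c),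
                (fnet m a ut (x i) - y i) ^ 2)) *
            ((1 + 2 * (ηl * (n:ℝ)) * K) *
              Real.sqrt (∑ i ∈ Finset.univ.filter (fun i => S i = c),
                (fnet m a ut (x i) - y i) ^ 2)) :=
            mul_self_le_mul_self (Real.sqrt_nonneg _) h3
        _ = (1 + 2 * (ηl * (n:ℝ)) * K) ^ 2 *
            (Real.sqrt (∑ i ∈ Finset.univ.filter (fun i => S i = c),
                (fnet m a ut (x i) - y i) ^ 2) *
              Real.sqrt (∑ i ∈ Finset.univ.filter (fun i => S i = c),
                (fnet m a ut (x i) - y i) ^ 2)) := by ring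
        _ = (1 + 2 * (ηl * (n:ℝ)) * K) ^ 2 *
            ∑ i ∈ Finset.univ.filter (fun i => S i = c),
              (fnet m a ut (x i) - y i) ^ 2 := by rw [h9]
    -- fiberwise identities
    have hfib0 : ∑ c : Fin N, ∑ j ∈ Finset.univ.filter (fun j => S j = c),
        (fnet m a ut (x j) - y j) ^ 2 = ∑ j : Fin n, (y j - fnet m a ut (x j)) ^ 2 := by
      rw [← Finset.sum_fiberwise Finset.univ S (fun j => (y j - fnet m a ut (x j)) ^ 2)]
      exact Finset.sum_congr rfl fun c _ => Finset.sum_congr rfl fun j _ => by ring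
    have hfib1 : ∀ k : ℕ, ∑ c : Fin N, ∑ j ∈ Finset.univ.filter (fun j => S j = c),
        |y j - fnet m a (w k c) (x j)| =
        ∑ j : Fin n, |y j - fnet m a (w k (S j)) (x j)| := by
      intro k
      rw [← Finset.sum_fiberwise Finset.univ S
        (fun j => |y j - fnet m a (w k (S j)) (x j)|)]
      exact Finset.sum_congr rfl fun c _ => Finset.sum_congr rfl fun j hj => by
        rw [(Finset.mem_filter.mp hj).2]
    have hfib2 : ∀ k : ℕ, ∑ c : Fin N, ∑ j ∈ Finset.univ.filter (fun j => S j = c),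
        (fnet m a (w k c) (x j) - y j) ^ 2 =
        ∑ j : Fin n, (y j - fnet m a (w k (S j)) (x j)) ^ 2 := by
      intro k
      rw [← Finset.sum_fiberwise Finset.univ S
        (fun j => (y j - fnet m a (w k (S j)) (x j)) ^ 2)]
      exact Finset.sum_congr rfl fun c _ => Finset.sum_congr rfl fun j hj => by
        rw [(Finset.mem_filter.mp hj).2]; ring
    -- per-k ℓ1 bound
    have hper : ∀ k ≤ K, ∑ j : Fin n, |y j - fnet m a (w k (S j)) (x j)| ≤
        Real.sqrt n * ((1 + 2 * (ηl * (n:ℝ)) * K) *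
          norm2 (fun i => y i - fnet m a ut (x i))) := by
      intro k hk
      have hl1 := sum_abs_le_sqrt Finset.univ (fun j => y j - fnet m a (w k (S j)) (x j))
      rw [Finset.card_univ, Fintype.card_fin] at hl1
      have hn2 : (norm2 (fun i => y i - fnet m a ut (x i))) ^ 2 =
          ∑ c : Fin N, ∑ j ∈ Finset.univ.filter (fun j => S j = c),
            (fnet m a ut (x j) - y j) ^ 2 := by
        rw [norm2, Real.sq_sqrt (Finset.sum_nonneg fun i _ => sq_nonneg _), ← hfib0]
      have hsum : ∑ j : Fin n, (y j - fnet m a (w k (S j)) (x j)) ^ 2 ≤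
          (1 + 2 * (ηl * (n:ℝ)) * K) ^ 2 *
            (norm2 (fun i => y i - fnet m a ut (x i))) ^ 2 := by
        rw [← hfib2 k, hn2, Finset.mul_sum]
        exact Finset.sum_le_sum fun c _ => hEk2 k hk c
      have hnn : (0:ℝ) ≤ (1 + 2 * (ηl * (n:ℝ)) * K) *
          norm2 (fun i => y i - fnet m a ut (x i)) := mul_nonneg h1p hnormy
      have h2 : Real.sqrt (∑ j : Fin n, (y j - fnet m a (w k (S j)) (x j)) ^ 2) ≤
          (1 + 2 * (ηl * (n:ℝ)) * K) * norm2 (fun i => y i - fnet m a ut (x i)) := by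
        have h := Real.sqrt_le_sqrt hsum
        rwa [show (1 + 2 * (ηl * (n:ℝ)) * K) ^ 2 *
            (norm2 (fun i => y i - fnet m a ut (x i))) ^ 2 =
            ((1 + 2 * (ηl * (n:ℝ)) * K) *
              norm2 (fun i => y i - fnet m a ut (x i))) ^ 2 from by ring,
          Real.sqrt_sq hnn] at h
      calc ∑ j : Fin n, |y j - fnet m a (w k (S j)) (x j)|
          ≤ Real.sqrt n * Real.sqrt (∑ j : Fin n,
              (y j - fnet m a (w k (S j)) (x j)) ^ 2) := hl1
        _ ≤ Real.sqrt n * ((1 + 2 * (ηl * (n:ℝ)) * K) *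
              norm2 (fun i => y i - fnet m a ut (x i))) :=
            mul_le_mul_of_nonneg_left h2 (Real.sqrt_nonneg _)
    -- per-(c,k) vector norm bound
    have hck : ∀ (c : Fin N) (k : ℕ),
        norm2 (fun i : Fin d => ηl * (Real.sqrt m)⁻¹ *
            ∑ j ∈ Finset.univ.filter (fun j => S j = c),
              (y j - fnet m a (w k c) (x j)) * x j i * posInd (dot (w k c r) (x j))) ≤
          ηl * (Real.sqrt m)⁻¹ * ∑ j ∈ Finset.univ.filter (fun j => S j = c),
            |y j - fnet m a (w k c) (x j)| := by
      intro c k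
      have heq : (fun i : Fin d => ηl * (Real.sqrt m)⁻¹ *
            ∑ j ∈ Finset.univ.filter (fun j => S j = c),
              (y j - fnet m a (w k c) (x j)) * x j i * posInd (dot (w k c r) (x j))) =
          (fun i : Fin d => ∑ j ∈ Finset.univ.filter (fun j => S j = c),
            (ηl * (Real.sqrt m)⁻¹ * ((y j - fnet m a (w k c) (x j)) *
              posInd (dot (w k c r) (x j)))) * x j i) := by
        funext i
        rw [Finset.mul_sum]
        exact Finset.sum_congr rfl fun j _ => by ring
      rw [heq, Finset.mul_sum]
      refine le_trans (norm2_sum_le _ _) (Finset.sum_le_sum fun j hj => ?_)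
      rw [norm2_smul, hx j, mul_one]
      have hscal : |ηl * (Real.sqrt m)⁻¹| = ηl * (Real.sqrt m)⁻¹ := abs_of_nonneg hsn
      have hind : |posInd (dot (w k c r) (x j))| ≤ 1 := by
        unfold posInd; split <;> simp
      have h6 := mul_le_mul_of_nonneg_left
        (mul_le_mul_of_nonneg_left hind (abs_nonneg (y j - fnet m a (w k c) (x j)))) hsn
      calc |ηl * (Real.sqrt m)⁻¹ * ((y j - fnet m a (w k c) (x j)) *
              posInd (dot (w k c r) (x j)))|
          = ηl * (Real.sqrt m)⁻¹ * (|y j - fnet m a (w k c) (x j)| *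
              |posInd (dot (w k c r) (x j))|) := by rw [abs_mul, hscal, abs_mul]
        _ ≤ ηl * (Real.sqrt m)⁻¹ * (|y j - fnet m a (w k c) (x j)| * 1) := h6
        _ = ηl * (Real.sqrt m)⁻¹ * |y j - fnet m a (w k c) (x j)| := by ring
    -- assemble part (ii)
    have h1 : norm2 (fun i : Fin d =>
          a r / N * ∑ c : Fin N, ∑ k ∈ Finset.range K,
            ηl * (Real.sqrt m)⁻¹ *
              ∑ j ∈ Finset.univ.filter (fun j => S j = c),
                (y j - fnet m a (w k c) (x j)) * x j i *
                  posInd (dot (w k c r) (x j))) =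
        (1 / N) * norm2 (fun i : Fin d => ∑ c : Fin N, ∑ k ∈ Finset.range K,
            ηl * (Real.sqrt m)⁻¹ *
              ∑ j ∈ Finset.univ.filter (fun j => S j = c),
                (y j - fnet m a (w k c) (x j)) * x j i *
                  posInd (dot (w k c r) (x j))) := by
      have h := norm2_smul (a r / (N:ℝ))
        (fun i : Fin d => ∑ c : Fin N, ∑ k ∈ Finset.range K,
          ηl * (Real.sqrt m)⁻¹ *
            ∑ j ∈ Finset.univ.filter (fun j => S j = c),
              (y j - fnet m a (w k c) (x j)) * x j i *
                posInd (dot (w k c r) (x j)))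
      rw [habs] at h
      exact h
    have h2 : norm2 (fun i : Fin d => ∑ c : Fin N, ∑ k ∈ Finset.range K,
            ηl * (Real.sqrt m)⁻¹ *
              ∑ j ∈ Finset.univ.filter (fun j => S j = c),
                (y j - fnet m a (w k c) (x j)) * x j i *
                  posInd (dot (w k c r) (x j))) ≤
        ∑ c : Fin N, ∑ k ∈ Finset.range K,
          norm2 (fun i : Fin d => ηl * (Real.sqrt m)⁻¹ *
            ∑ j ∈ Finset.univ.filter (fun j => S j = c),
              (y j - fnet m a (w k c) (x j)) * x j i *
                posInd (dot (w k c r) (x j))) := by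
      refine le_trans (norm2_sum_le Finset.univ
        (fun c i => ∑ k ∈ Finset.range K,
          ηl * (Real.sqrt m)⁻¹ *
            ∑ j ∈ Finset.univ.filter (fun j => S j = c),
              (y j - fnet m a (w k c) (x j)) * x j i *
                posInd (dot (w k c r) (x j)))) ?_
      exact Finset.sum_le_sum fun c _ => norm2_sum_le (Finset.range K)
        (fun k i => ηl * (Real.sqrt m)⁻¹ *
          ∑ j ∈ Finset.univ.filter (fun j => S j = c),
            (y j - fnet m a (w k c) (x j)) * x j i *
              posInd (dot (w k c r) (x j)))
    have h3 : ∑ c : Fin N, ∑ k ∈ Finset.range K,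
          norm2 (fun i : Fin d => ηl * (Real.sqrt m)⁻¹ *
            ∑ j ∈ Finset.univ.filter (fun j => S j = c),
              (y j - fnet m a (w k c) (x j)) * x j i *
                posInd (dot (w k c r) (x j))) ≤
        (K:ℝ) * (ηl * (Real.sqrt m)⁻¹ * (Real.sqrt n * ((1 + 2 * (ηl * (n:ℝ)) * K) *
          norm2 (fun i => y i - fnet m a ut (x i))))) := by
      calc ∑ c : Fin N, ∑ k ∈ Finset.range K,
            norm2 (fun i : Fin d => ηl * (Real.sqrt m)⁻¹ *
              ∑ j ∈ Finset.univ.filter (fun j => S j = c),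
                (y j - fnet m a (w k c) (x j)) * x j i *
                  posInd (dot (w k c r) (x j)))
          ≤ ∑ c : Fin N, ∑ k ∈ Finset.range K,
              ηl * (Real.sqrt m)⁻¹ * ∑ j ∈ Finset.univ.filter (fun j => S j = c),
                |y j - fnet m a (w k c) (x j)| :=
            Finset.sum_le_sum fun c _ => Finset.sum_le_sum fun k _ => hck c k
        _ = ∑ k ∈ Finset.range K, ηl * (Real.sqrt m)⁻¹ *
              ∑ j : Fin n, |y j - fnet m a (w k (S j)) (x j)| := by
            rw [Finset.sum_comm]
            exact Finset.sum_congr rfl fun k _ => by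
              rw [← Finset.mul_sum, hfib1 k]
        _ ≤ ∑ k ∈ Finset.range K, ηl * (Real.sqrt m)⁻¹ *
              (Real.sqrt n * ((1 + 2 * (ηl * (n:ℝ)) * K) *
                norm2 (fun i => y i - fnet m a ut (x i)))) :=
            Finset.sum_le_sum fun k hk => mul_le_mul_of_nonneg_left
              (hper k (le_of_lt (Finset.mem_range.mp hk))) hsn
        _ = (K:ℝ) * (ηl * (Real.sqrt m)⁻¹ * (Real.sqrt n *
              ((1 + 2 * (ηl * (n:ℝ)) * K) *
                norm2 (fun i => y i - fnet m a ut (x i))))) := by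
            rw [Finset.sum_const, Finset.card_range, nsmul_eq_mul]
    have hC : (0:ℝ) ≤ (1 / N) * ((K:ℝ) * (ηl * (Real.sqrt m)⁻¹ * (Real.sqrt n *
        ((1 + 2 * (ηl * (n:ℝ)) * K) * norm2 (fun i => y i - fnet m a ut (x i)))))) := by
      apply mul_nonneg (by positivity)
      apply mul_nonneg (by positivity)
      exact mul_nonneg hsn (mul_nonneg (Real.sqrt_nonneg _) (mul_nonneg h1p hnormy))
    have hfinal : (1 / N) * ((K:ℝ) * (ηl * (Real.sqrt m)⁻¹ * (Real.sqrt n *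
        ((1 + 2 * (ηl * (n:ℝ)) * K) * norm2 (fun i => y i - fnet m a ut (x i)))))) ≤
        2 * ηl * K * (1 + 2 * ηl * n * K) * Real.sqrt n / (N * Real.sqrt m) *
          norm2 (fun i => y i - fnet m a ut (x i)) := by
      rw [show (2 * ηl * (K:ℝ) * (1 + 2 * ηl * n * K) * Real.sqrt n / (N * Real.sqrt m) *
          norm2 (fun i => y i - fnet m a ut (x i))) =
          2 * ((1 / N) * ((K:ℝ) * (ηl * (Real.sqrt m)⁻¹ * (Real.sqrt n *
            ((1 + 2 * (ηl * (n:ℝ)) * K) *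
              norm2 (fun i => y i - fnet m a ut (x i))))))) from by
        field_simp]
      linarith
    calc norm2 (fun i : Fin d =>
          a r / N * ∑ c : Fin N, ∑ k ∈ Finset.range K,
            ηl * (Real.sqrt m)⁻¹ *
              ∑ j ∈ Finset.univ.filter (fun j => S j = c),
                (y j - fnet m a (w k c) (x j)) * x j i *
                  posInd (dot (w k c r) (x j)))
        = (1 / N) * norm2 (fun i : Fin d => ∑ c : Fin N, ∑ k ∈ Finset.range K,
            ηl * (Real.sqrt m)⁻¹ *
              ∑ j ∈ Finset.univ.filter (fun j => S j = c),
                (y j - fnet m a (w k c) (x j)) * x j i *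
                  posInd (dot (w k c r) (x j))) := h1
      _ ≤ (1 / N) * (∑ c : Fin N, ∑ k ∈ Finset.range K,
            norm2 (fun i : Fin d => ηl * (Real.sqrt m)⁻¹ *
              ∑ j ∈ Finset.univ.filter (fun j => S j = c),
                (y j - fnet m a (w k c) (x j)) * x j i *
                  posInd (dot (w k c r) (x j)))) :=
          mul_le_mul_of_nonneg_left h2 (by positivity)
      _ ≤ (1 / N) * ((K:ℝ) * (ηl * (Real.sqrt m)⁻¹ * (Real.sqrt n *
            ((1 + 2 * (ηl * (n:ℝ)) * K) *
              norm2 (fun i => y i - fnet m a ut (x i)))))) :=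
          mul_le_mul_of_nonneg_left h3 (by positivity)
      _ ≤ 2 * ηl * K * (1 + 2 * ηl * n * K) * Real.sqrt n / (N * Real.sqrt m) *
            norm2 (fun i => y i - fnet m a ut (x i)) := hfinal

end
end
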